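/- In the standardness condition for a term C_i(a,b) of the C_i ordinal notation system, the built-from-below condition is unchanged if (i) the clause 'lies inside an occurrence of a subterm z of a with z < C_i(a,b)' is replaced by 'lies inside an occurrence of a subterm z of a with z ≤ b', and it is likewise unchanged if (ii) in the passthrough clause, 'does not lie inside a subterm of that occurrence of C_j(e,f) which is < C_j(e,f)' is replaced by 'does not lie inside a subterm of that occurrence of C_j(e,f) which is ≤ f'. That is, each replacement yields an equivalent standardness predicate on terms. -/

import Mathlib

/-!
The relation `<` is a strict order, total on terms whose right spines have lexicographically
nondecreasing heads, in particular on standard terms. The weakened conditions imply the original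
ones because `b < C_i(a,b)` and `f < C_j(e,f)`. For the converses fix an occurrence of `x > a` in
a standard term `a` and look at the subterms on the path from the root of `a` down to `x`.

(i) Suppose none of them is `≤ b` but one is `< C_i(a,b)`. Then their least element is some
`C_k(u,v) < C_i(a,b)` with `(k,u) < (i,a)`. If `k < i` it is a passthrough witness. If `k = i`
the path continues into `u` (its continuation into `v` would meet a smaller subterm), and the
condition for the standard term `C_i(u,v)` at `x > a > u` yields either a subterm below the
least one, which is absurd, or a passthrough witness that also serves for `a`.

(ii) Suppose none of them is `< C_i(a,b)`. Let `y` be the last subterm on the path that is not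
`≥ x`. The weakened condition at the next subterm, which is `≥ x > a`, gives a witness
`C_j(e,f)` at or above `y`, and the least subterm between it and `y` is `≤ C_j(e,f)` but not
`≤ f`, so its index is at most `j`. As everything below `y` is `> y`, it is a passthrough
witness.
-/

/-- Terms of the `C_i` ordinal notation system: the constant `0` and, for each natural
number `i`, a binary function symbol `C_i`. -/
inductive CT where
  | zero : CT
  | C (i : ℕ) (a b : CT) : CT

/-- The comparison relation: `0 < C_i(a,b)`, and `C_i(a,b) < C_j(c,d)` iff
`C_i(a,b) ≤ d`, or (`b < C_j(c,d)` and `(i,a) < (j,c)` lexicographically). -/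
def clt : CT → CT → Prop
  | _, .zero => False
  | .zero, .C _ _ _ => True
  | .C i a b, .C j c d =>
      (clt (CT.C i a b) d ∨ CT.C i a b = d) ∨
      (clt b (CT.C j c d) ∧ (i < j ∨ (i = j ∧ clt a c)))
termination_by t u => sizeOf t + sizeOf u
decreasing_by all_goals (simp only [CT.C.sizeOf_spec]; omega)

/-- `t ≤ u` for terms. -/
def cle (t u : CT) : Prop := clt t u ∨ t = u

/-- Directions into the two arguments of `C_i`. -/
inductive Dir where
  | l : Dir
  | r : Dir

/-- The subterm occurrence of a term at a position (a path of directions), if any. -/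
def occAt : CT → List Dir → Option CT
  | t, [] => some t
  | .zero, _ :: _ => none
  | .C _ a _, Dir.l :: p => occAt a p
  | .C _ _ b, Dir.r :: p => occAt b p

/-- `a` is built from below from `< C_i(a,b)` with passthrough for `(C_j : j < i)`:
every occurrence (position `p`) in `a` of a subterm `x` with `x > a` either
(i) lies inside an occurrence of a subterm `z` of `a` with `z < C_i(a,b)`
    (or, if `leB = true`, with `z ≤ b`), or
(ii) is a proper subterm of an occurrence of a term `C_j(e,f)` with `j < i` and does not
    lie inside a subterm of that occurrence of `C_j(e,f)` which is `< C_j(e,f)`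
    (or, if `passLeF = true`, which is `≤ f`). -/
def BFB (leB passLeF : Bool) (i : ℕ) (a b : CT) : Prop :=
  ∀ (p : List Dir) (x : CT), occAt a p = some x → clt a x →
    (∃ (q : List Dir) (z : CT), q <+: p ∧ occAt a q = some z ∧
        (if leB then cle z b else clt z (CT.C i a b))) ∨
    (∃ (q : List Dir) (j : ℕ) (e f : CT), q <+: p ∧ q ≠ p ∧
        occAt a q = some (CT.C j e f) ∧ j < i ∧
        ∀ (r : List Dir) (z : CT), q <+: r → r <+: p → occAt a r = some z →
          ¬ (if passLeF then cle z f else clt z (CT.C j e f)))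

/-- Standardness of terms of the `C_i` system (with the indicated variants of the
built-from-below condition). -/
def Std (leB passLeF : Bool) : CT → Prop
  | .zero => True
  | .C i a b => Std leB passLeF a ∧ Std leB passLeF b ∧
      (b = CT.zero ∨ ∃ (j : ℕ) (c d : CT), b = CT.C j c d ∧
        (i < j ∨ (i = j ∧ cle a c))) ∧
      BFB leB passLeF i a b

theorem List.IsPrefix.antisymm {α : Type*} {l₁ l₂ : List α} (h : l₁ <+: l₂)
    (h' : l₂ <+: l₁) : l₁ = l₂ :=
  h.eq_of_length (le_antisymm h.length_le h'.length_le)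

theorem List.prefix_or_concat_prefix {α : Type*} {r s p : List α} {d : α} (hr : r <+: p)
    (hs : s ++ [d] <+: p) : r <+: s ∨ s ++ [d] <+: r := by
  rcases List.prefix_or_prefix_of_prefix hr hs with h | h
  · rcases List.prefix_concat_iff.mp h with rfl | h
    exacts [Or.inr (List.prefix_refl _), Or.inl h]
  · exact Or.inr h

theorem List.exists_last_prefix_not {α : Type*} {Q : List α → Prop} {p : List α}
    (hnil : ¬ Q []) (hp : Q p) :
    ∃ s d, s ++ [d] <+: p ∧ ¬ Q s ∧ ∀ r, s ++ [d] <+: r → r <+: p → Q r := by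
  suffices key : ∀ t, t <+: p → (∀ r, t <+: r → r <+: p → Q r) →
      ∃ s d, s ++ [d] <+: p ∧ ¬ Q s ∧ ∀ r, s ++ [d] <+: r → r <+: p → Q r from
    key p (List.prefix_refl p) fun r hr hr' => hr.antisymm hr' ▸ hp
  intro t
  induction t using List.reverseRecOn with
  | nil => exact fun _ hall => absurd (hall [] (List.prefix_refl _) List.nil_prefix) hnil
  | append_singleton t d ih =>
    intro ht hall
    by_cases hall' : ∀ r, t <+: r → r <+: p → Q r
    · exact ih ((List.prefix_append t [d]).trans ht) hall'
    refine ⟨t, d, ht, fun hQ => hall' fun r hr hr' => ?_, hall⟩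
    rcases List.prefix_or_concat_prefix hr' ht with h | h
    · exact hr.antisymm h ▸ hQ
    · exact hall r h hr'

namespace CT

instance : LT CT := ⟨clt⟩

instance : LE CT := ⟨cle⟩

theorem C_lt_C_iff {i j : ℕ} {a b c d : CT} :
    C i a b < C j c d ↔ C i a b ≤ d ∨ (b < C j c d ∧ (i < j ∨ (i = j ∧ a < c))) := by
  change clt _ _ ↔ _
  rw [clt]
  rfl

protected theorem not_lt_zero (t : CT) : ¬ t < zero := by
  cases t <;> simp [LT.lt, clt]

theorem zero_lt_C (i : ℕ) (a b : CT) : zero < C i a b := by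
  simp [LT.lt, clt]

theorem lt_C_right (i : ℕ) (a b : CT) : b < C i a b := by
  cases b with
  | zero => exact zero_lt_C _ _ _
  | C _ _ _ => exact C_lt_C_iff.mpr (Or.inl (Or.inr rfl))

theorem C_ne_right (i : ℕ) (a b : CT) : C i a b ≠ b := fun h => by
  have := congrArg sizeOf h
  simp only [C.sizeOf_spec] at this
  omega

protected theorem lt_trans : {s t u : CT} → s < t → t < u → s < u
  | _, _, zero, _, h => absurd h (CT.not_lt_zero _)
  | _, zero, C _ _ _, h, _ => absurd h (CT.not_lt_zero _)
  | zero, C _ _ _, C _ _ _, _, _ => zero_lt_C _ _ _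
  | C i a b, C j c d, C k e f, h₁, h₂ => by
    rcases C_lt_C_iff.mp h₂ with (h₂ | rfl) | ⟨hd, hjk⟩
    · exact C_lt_C_iff.mpr (Or.inl (Or.inl (CT.lt_trans h₁ h₂)))
    · exact C_lt_C_iff.mpr (Or.inl (Or.inl h₁))
    rcases C_lt_C_iff.mp h₁ with (h₁ | rfl) | ⟨hb, hij⟩
    · exact CT.lt_trans h₁ hd
    · exact hd
    refine C_lt_C_iff.mpr (Or.inr ⟨CT.lt_trans hb h₂, ?_⟩)
    rcases hij with hij | ⟨rfl, hac⟩ <;> rcases hjk with hjk | ⟨rfl, hce⟩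
    · exact Or.inl (hij.trans hjk)
    · exact Or.inl hij
    · exact Or.inl hjk
    · exact Or.inr ⟨rfl, CT.lt_trans hac hce⟩
termination_by s t u => sizeOf s + sizeOf t + sizeOf u

protected theorem lt_irrefl : (t : CT) → ¬ t < t
  | zero => CT.not_lt_zero zero
  | C i a b => fun h => by
    rcases C_lt_C_iff.mp h with (h | h) | ⟨-, h | ⟨-, h⟩⟩
    · exact CT.lt_irrefl b (CT.lt_trans (lt_C_right i a b) h)
    · exact C_ne_right i a b h
    · exact Nat.lt_irrefl i h
    · exact CT.lt_irrefl a h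

instance : PartialOrder CT where
  le := (· ≤ ·)
  lt := (· < ·)
  le_refl _ := Or.inr rfl
  le_trans _ _ _ := by
    rintro (h₁ | rfl) (h₂ | rfl)
    exacts [Or.inl (CT.lt_trans h₁ h₂), Or.inl h₁, Or.inl h₂, Or.inr rfl]
  lt_iff_le_not_ge s t := by
    refine ⟨fun h => ⟨Or.inl h, ?_⟩, ?_⟩
    · rintro (h' | rfl)
      exacts [CT.lt_irrefl _ (CT.lt_trans h h'), CT.lt_irrefl _ h]
    · rintro ⟨h | rfl, h'⟩
      exacts [h, absurd (Or.inr rfl) h']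
  le_antisymm s t := by
    rintro (h | rfl) (h' | h')
    exacts [(CT.lt_irrefl _ (CT.lt_trans h h')).elim, h'.symm, rfl, rfl]

theorem exists_eq_C_of_lt_C_of_not_le {z e f : CT} {j : ℕ} (h : z < C j e f) (hf : ¬ z ≤ f) :
    ∃ k u v, z = C k u v ∧ (k < j ∨ (k = j ∧ u < e)) := by
  cases z with
  | zero =>
    cases f with
    | zero => exact absurd le_rfl hf
    | C _ _ _ => exact absurd (zero_lt_C _ _ _).le hf
  | C k u v =>
    rcases C_lt_C_iff.mp h with h | ⟨-, hk⟩
    exacts [absurd h hf, ⟨k, u, v, rfl, hk⟩]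

/-- Standardness without the built-from-below condition. -/
def SpineSorted : CT → Prop
  | zero => True
  | C i a b => SpineSorted a ∧ SpineSorted b ∧
      (b = zero ∨ ∃ (j : ℕ) (c d : CT), b = C j c d ∧ (i < j ∨ (i = j ∧ a ≤ c)))

theorem C_lt_or_gt_of_head_lt {i j : ℕ} {a b c d : CT} (hh : i < j ∨ (i = j ∧ a < c))
    (hb : C j c d ≤ b ∨ b < C j c d) : C i a b < C j c d ∨ C j c d < C i a b := by
  rcases hb with hb | hb
  · exact Or.inr (hb.trans_lt (lt_C_right i a b))
  · exact Or.inl (C_lt_C_iff.mpr (Or.inr ⟨hb, hh⟩))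

theorem C_lt_C_of_lt_right {i : ℕ} {a b d : CT}
    (hd : d = zero ∨ ∃ (j : ℕ) (c d' : CT), d = C j c d' ∧ (i < j ∨ (i = j ∧ a ≤ c)))
    (hbd : b < d) (h : C i a b ≤ d ∨ d < C i a b) : C i a b < C i a d := by
  refine C_lt_C_iff.mpr (Or.inl (h.resolve_right fun hdb => ?_))
  rcases hd with rfl | ⟨j, c, d', rfl, hh⟩
  · exact CT.not_lt_zero b hbd
  rcases C_lt_C_iff.mp hdb with hdb | ⟨-, hh'⟩
  · exact not_le_of_gt hbd hdb
  rcases hh with hh | ⟨rfl, hac⟩ <;> rcases hh' with hh' | ⟨hji, hca⟩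
  · omega
  · omega
  · omega
  · exact not_lt_of_ge hac hca

theorem SpineSorted.le_or_gt : {s t : CT} → SpineSorted s → SpineSorted t → s ≤ t ∨ t < s
  | zero, zero, _, _ => Or.inl le_rfl
  | zero, C _ _ _, _, _ => Or.inl (zero_lt_C _ _ _).le
  | C _ _ _, zero, _, _ => Or.inr (zero_lt_C _ _ _)
  | C i a b, C j c d, hs, ht => by
    obtain ⟨ha, hb, hbh⟩ := id hs
    obtain ⟨hc, hd, hdh⟩ := id ht
    have of_lt_or_gt (h : C i a b < C j c d ∨ C j c d < C i a b) :
        C i a b ≤ C j c d ∨ C j c d < C i a b :=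
      h.imp_left le_of_lt
    rcases Nat.lt_trichotomy i j with hij | rfl | hij
    · exact of_lt_or_gt (C_lt_or_gt_of_head_lt (Or.inl hij) (le_or_gt ht hb))
    · rcases le_or_gt ha hc with hac | hca
      · rcases hac.lt_or_eq with hac | rfl
        · exact of_lt_or_gt (C_lt_or_gt_of_head_lt (Or.inr ⟨rfl, hac⟩) (le_or_gt ht hb))
        rcases le_or_gt hb hd with hbd | hdb
        · rcases hbd.lt_or_eq with hbd | rfl
          · exact Or.inl (C_lt_C_of_lt_right hdh hbd (le_or_gt hs hd)).le
          · exact Or.inl le_rfl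
        · exact Or.inr (C_lt_C_of_lt_right hbh hdb (le_or_gt ht hb))
      · exact of_lt_or_gt (C_lt_or_gt_of_head_lt (Or.inr ⟨rfl, hca⟩) (le_or_gt hs hd)).symm
    · exact of_lt_or_gt (C_lt_or_gt_of_head_lt (Or.inl hij) (le_or_gt hs hd)).symm
termination_by s t => sizeOf s + sizeOf t

theorem occAt_nil (t : CT) : occAt t [] = some t := by
  simp [occAt]

theorem occAt_append (t : CT) (q r : List Dir) :
    occAt t (q ++ r) = (occAt t q).bind (occAt · r) := by
  induction q generalizing t with
  | nil => simp [occAt]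
  | cons d q ih =>
    cases t with
    | zero => simp [occAt]
    | C _ _ _ => cases d <;> simp [occAt, ih]

theorem occAt_append_of_occAt {t u : CT} {q : List Dir} (h : occAt t q = some u) (r : List Dir) :
    occAt t (q ++ r) = occAt u r := by
  rw [occAt_append, h, Option.bind_some]

theorem exists_occAt_of_prefix {t x : CT} {p q : List Dir} (h : occAt t p = some x)
    (hq : q <+: p) : ∃ z, occAt t q = some z := by
  obtain ⟨r, rfl⟩ := hq
  rw [occAt_append] at h
  exact Option.isSome_iff_exists.mp (Option.isSome_of_isSome_bind (by rw [h]; rfl))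

theorem of_occAt {P : CT → Prop} (hP : ∀ i u v, P (C i u v) → P u ∧ P v) :
    ∀ {q : List Dir} {t s : CT}, P t → occAt t q = some s → P s
  | [], _, _, ht, h => Option.some.inj ((occAt_nil _).symm.trans h) ▸ ht
  | _ :: _, zero, _, _, h => nomatch h
  | Dir.l :: _, C i u v, _, ht, h => of_occAt hP (hP i u v ht).1 h
  | Dir.r :: _, C i u v, _, ht, h => of_occAt hP (hP i u v ht).2 h

theorem SpineSorted.of_occAt {q : List Dir} {t s : CT} (ht : SpineSorted t)
    (h : occAt t q = some s) : SpineSorted s :=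
  CT.of_occAt (fun _ _ _ h => ⟨h.1, h.2.1⟩) ht h

theorem SpineSorted.exists_min_occAt {a y : CT} (ha : SpineSorted a) {q s : List Dir}
    (hs : occAt a s = some y) (hq : q <+: s) :
    ∃ m μ, q <+: m ∧ m <+: s ∧ occAt a m = some μ ∧
      ∀ r w, q <+: r → r <+: s → occAt a r = some w → μ ≤ w := by
  induction s using List.reverseRecOn generalizing y with
  | nil =>
    obtain rfl := List.prefix_nil.mp hq
    refine ⟨[], y, hq, hq, hs, fun r w _ hr hw => ?_⟩
    obtain rfl := List.prefix_nil.mp hr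
    exact (Option.some.inj (hs.symm.trans hw)).le
  | append_singleton s d ih =>
    have eq_y {w : CT} (hw : occAt a (s ++ [d]) = some w) : w = y :=
      Option.some.inj (hw.symm.trans hs)
    rcases List.prefix_concat_iff.mp hq with rfl | hq
    · refine ⟨_, y, List.prefix_refl _, List.prefix_refl _, hs, fun r w hr hr' hw => ?_⟩
      obtain rfl := hr.antisymm hr'
      exact (eq_y hw).ge
    obtain ⟨y', hy'⟩ := exists_occAt_of_prefix hs (List.prefix_append s [d])
    obtain ⟨m, μ, hqm, hms, hm, hmin⟩ := ih hy' hq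
    rcases (ha.of_occAt hm).le_or_gt (ha.of_occAt hs) with hμy | hyμ
    · refine ⟨m, μ, hqm, hms.trans (List.prefix_append s [d]), hm, fun r w hr hr' hw => ?_⟩
      rcases List.prefix_concat_iff.mp hr' with rfl | hr'
      exacts [eq_y hw ▸ hμy, hmin r w hr hr' hw]
    · refine ⟨s ++ [d], y, hq.trans (List.prefix_append s [d]), List.prefix_refl _, hs,
        fun r w hr hr' hw => ?_⟩
      rcases List.prefix_concat_iff.mp hr' with rfl | hr'
      exacts [(eq_y hw).ge, (hyμ.trans_le (hmin r w hr hr' hw)).le]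

end CT

open CT

/-- Clause (ii) of `BFB passLeF` for the occurrence at position `p` in `a`. -/
def Passthrough (passLeF : Bool) (i : ℕ) (a : CT) (p : List Dir) : Prop :=
  ∃ (q : List Dir) (j : ℕ) (e f : CT), q <+: p ∧ q ≠ p ∧
    occAt a q = some (CT.C j e f) ∧ j < i ∧
    ∀ (r : List Dir) (z : CT), q <+: r → r <+: p → occAt a r = some z →
      ¬ (if passLeF then cle z f else clt z (CT.C j e f))

theorem Passthrough.append {passLeF : Bool} {i : ℕ} {a u : CT} {m t : List Dir}
    (h : Passthrough passLeF i u t) (hm : occAt a m = some u) :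
    Passthrough passLeF i a (m ++ t) := by
  obtain ⟨q, j, e, f, hq, hne, he, hj, hblock⟩ := h
  refine ⟨m ++ q, j, e, f, (List.prefix_append_right_inj m).mpr hq,
    fun h => hne (List.append_cancel_left h), by rwa [occAt_append_of_occAt hm], hj, ?_⟩
  intro r z hr hrt hz
  obtain ⟨r, rfl⟩ := (List.prefix_append m q).trans hr
  exact hblock r z ((List.prefix_append_right_inj m).mp hr)
    ((List.prefix_append_right_inj m).mp hrt) (by rwa [occAt_append_of_occAt hm] at hz)

theorem Std.bfb {leB passLeF : Bool} {i : ℕ} {a b : CT} (h : Std leB passLeF (CT.C i a b)) :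
    BFB leB passLeF i a b :=
  h.2.2.2

theorem Std.spineSorted {leB passLeF : Bool} : {t : CT} → Std leB passLeF t → SpineSorted t
  | .zero, _ => trivial
  | .C _ _ _, ⟨ha, hb, hh, _⟩ => ⟨ha.spineSorted, hb.spineSorted, hh⟩

theorem Std.of_occAt {leB passLeF : Bool} {q : List Dir} {t s : CT} (ht : Std leB passLeF t)
    (h : occAt t q = some s) : Std leB passLeF s :=
  CT.of_occAt (fun _ _ _ h => ⟨h.1, h.2.1⟩) ht h

theorem BFB.false_false_of_true_false {i : ℕ} {a b : CT} (h : BFB true false i a b) :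
    BFB false false i a b := fun p x hx hax =>
  (h p x hx hax).imp (fun ⟨q, z, hq, hz, hzb⟩ =>
    ⟨q, z, hq, hz, (show z ≤ b from hzb).trans_lt (lt_C_right i a b)⟩) id

theorem BFB.false_true_of_false_false {i : ℕ} {a b : CT} (h : BFB false false i a b) :
    BFB false true i a b := fun p x hx hax =>
  (h p x hx hax).imp id fun ⟨q, j, e, f, hq, hne, he, hj, hblock⟩ =>
    ⟨q, j, e, f, hq, hne, he, hj, fun r z hr hrp hz hzf =>
      hblock r z hr hrp hz ((show z ≤ f from hzf).trans_lt (lt_C_right j e f))⟩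

theorem passthrough_of_lt {i : ℕ} {a b x z : CT} {p q : List Dir} (ha : Std false false a)
    (hx : occAt a p = some x) (hax : a < x)
    (hb : ∀ q z, q <+: p → occAt a q = some z → ¬ z ≤ b)
    (hq : q <+: p) (hz : occAt a q = some z) (hzP : z < C i a b) :
    Passthrough false i a p := by
  obtain ⟨m, μ, -, hmp, hm, hmin⟩ := ha.spineSorted.exists_min_occAt hx List.nil_prefix
  obtain ⟨k, u, v, rfl, hk⟩ := exists_eq_C_of_lt_C_of_not_le
    ((hmin q z List.nil_prefix hq hz).trans_lt hzP) (hb m _ hmp hm)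
  have hμa : C k u v ≤ a := hmin [] a List.nil_prefix List.nil_prefix (occAt_nil a)
  obtain ⟨d, t, rfl⟩ : ∃ d t, p = m ++ d :: t := by
    obtain ⟨_ | ⟨d, t⟩, rfl⟩ := hmp
    · rw [List.append_nil, hm] at hx
      exact absurd (Option.some.inj hx ▸ hμa) (not_le_of_gt hax)
    · exact ⟨d, t, rfl⟩
  have hμ_min : ∀ r w, m <+: r → r <+: m ++ d :: t → occAt a r = some w → ¬ w < C k u v :=
    fun r w _ hr hw => not_lt_of_ge (hmin r w List.nil_prefix hr hw)
  rcases hk with hk | ⟨rfl, hua⟩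
  · exact ⟨m, k, u, v, List.prefix_append _ _, by simp, hm, hk, hμ_min⟩
  cases d with
  | r =>
    refine absurd (lt_C_right k u v)
      (hμ_min (m ++ [Dir.r]) v (List.prefix_append _ _) ⟨t, by simp⟩ ?_)
    simp [occAt_append_of_occAt hm, occAt]
  | l =>
    have hu : occAt a (m ++ [Dir.l]) = some u := by simp [occAt_append_of_occAt hm, occAt]
    rw [List.append_cons] at hx hμ_min ⊢
    rcases (ha.of_occAt hm).bfb t x (by rwa [occAt_append_of_occAt hu] at hx) (hua.trans hax)
      with ⟨t', w, ht', hw, hwμ⟩ | hpass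
    · refine absurd hwμ (hμ_min (m ++ [Dir.l] ++ t') w ?_ ?_ ?_)
      · exact (List.prefix_append _ _).trans (List.prefix_append _ _)
      · exact (List.prefix_append_right_inj _).mpr ht'
      · rwa [occAt_append_of_occAt hu]
    · exact Passthrough.append hpass hu

theorem BFB.true_false_of_false_false {i : ℕ} {a b : CT} (ha : Std false false a)
    (h : BFB false false i a b) : BFB true false i a b := by
  intro p x hx hax
  by_cases hb : ∃ q z, q <+: p ∧ occAt a q = some z ∧ z ≤ b
  · exact Or.inl hb
  simp only [not_exists, not_and] at hb
  rcases h p x hx hax with ⟨q, z, hq, hz, hzP⟩ | hpass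
  · exact Or.inr (passthrough_of_lt ha hx hax hb hq hz hzP)
  · exact Or.inr hpass

theorem passthrough_of_gap {i : ℕ} {a b y y₁ : CT} {p s : List Dir} {d : Dir}
    (ha : SpineSorted a) (h : BFB false true i a b)
    (hP : ∀ q z, q <+: p → occAt a q = some z → ¬ z < C i a b)
    (hsp : s ++ [d] <+: p) (hy : occAt a s = some y) (hy₁ : occAt a (s ++ [d]) = some y₁)
    (hay₁ : a < y₁)
    (hgap : ∀ r w, s ++ [d] <+: r → r <+: p → occAt a r = some w → y < w) :
    Passthrough false i a p := by
  rcases h (s ++ [d]) y₁ hy₁ hay₁ with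
    ⟨q, z, hq, hz, hzP⟩ | ⟨q, j, e, f, hq, hne, he, hj, hblock⟩
  · exact absurd hzP (hP q z (hq.trans hsp) hz)
  have hqs : q <+: s := (List.prefix_concat_iff.mp hq).resolve_left hne
  obtain ⟨m, μ, hqm, hms, hm, hmin⟩ := ha.exists_min_occAt hy hqs
  obtain ⟨k, u, v, rfl, hk⟩ : ∃ k u v, μ = C k u v ∧ k < i := by
    have hμf : ¬ μ ≤ f := hblock m μ hqm (hms.trans (List.prefix_append s [d])) hm
    rcases (hmin q _ (List.prefix_refl q) hqs he).lt_or_eq with hμe | rfl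
    · obtain ⟨k, u, v, rfl, hk⟩ := exists_eq_C_of_lt_C_of_not_le hμe hμf
      exact ⟨k, u, v, rfl, by omega⟩
    · exact ⟨j, e, f, rfl, hj⟩
  have hμ_min : ∀ r w, m <+: r → r <+: p → occAt a r = some w → C k u v ≤ w := by
    intro r w hmr hrp hw
    rcases List.prefix_or_concat_prefix hrp hsp with hrs | hsr
    · exact hmin r w (hqm.trans hmr) hrs hw
    · exact ((hmin s y hqs (List.prefix_refl s) hy).trans_lt (hgap r w hsr hrp hw)).le
  have hmp : m ≠ p := by
    rintro rfl
    simpa using (hsp.trans hms).length_le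
  exact ⟨m, k, u, v, hms.trans ((List.prefix_append s [d]).trans hsp), hmp, hm, hk,
    fun r w hmr hrp hw => not_lt_of_ge (hμ_min r w hmr hrp hw)⟩

theorem BFB.false_false_of_false_true {i : ℕ} {a b : CT} (ha : SpineSorted a)
    (h : BFB false true i a b) : BFB false false i a b := by
  intro p x hx hax
  by_cases hP : ∃ q z, q <+: p ∧ occAt a q = some z ∧ z < C i a b
  · exact Or.inl hP
  simp only [not_exists, not_and] at hP
  obtain ⟨s, d, hsp, hs, hgap⟩ :=
    List.exists_last_prefix_not (Q := fun r => ∀ w, occAt a r = some w → x ≤ w) (p := p)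
      (fun h => not_le_of_gt hax (h a (occAt_nil a)))
      (fun w hw => (Option.some.inj (hx.symm.trans hw)).le)
  simp only [not_forall] at hs
  obtain ⟨y, hy, hxy⟩ := hs
  have hyx : y < x := ((ha.of_occAt hx).le_or_gt (ha.of_occAt hy)).resolve_left hxy
  obtain ⟨y₁, hy₁⟩ := exists_occAt_of_prefix hx hsp
  exact Or.inr (passthrough_of_gap ha h hP hsp hy hy₁
    (lt_of_lt_of_le hax (hgap _ (List.prefix_refl _) hsp y₁ hy₁))
    fun r w hsr hrp hw => hyx.trans_le (hgap r hsr hrp w hw))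

theorem std_iff_std_of_bfb_iff {leB passLeF leB' passLeF' : Bool}
    (h : ∀ i a b, Std leB passLeF a → Std leB' passLeF' a →
      (BFB leB passLeF i a b ↔ BFB leB' passLeF' i a b)) :
    ∀ t, Std leB passLeF t ↔ Std leB' passLeF' t
  | .zero => Iff.rfl
  | .C i a b => by
    have iha := std_iff_std_of_bfb_iff h a
    have ihb := std_iff_std_of_bfb_iff h b
    constructor
    · rintro ⟨ha, hb, hh, hbfb⟩
      exact ⟨iha.mp ha, ihb.mp hb, hh, (h i a b ha (iha.mp ha)).mp hbfb⟩
    · rintro ⟨ha, hb, hh, hbfb⟩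
      exact ⟨iha.mpr ha, ihb.mpr hb, hh, (h i a b (iha.mpr ha) ha).mpr hbfb⟩

theorem std_variants_equiv :
    (∀ t : CT, Std false false t ↔ Std true false t) ∧
    (∀ t : CT, Std false false t ↔ Std false true t) :=
  ⟨std_iff_std_of_bfb_iff fun _ _ _ ha _ =>
      ⟨BFB.true_false_of_false_false ha, BFB.false_false_of_true_false⟩,
    std_iff_std_of_bfb_iff fun _ _ _ _ ha =>
      ⟨BFB.false_true_of_false_false, BFB.false_false_of_false_true ha.spineSorted⟩⟩
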